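/- Let ρ and σ be density operators on a finite-dimensional Hilbert space with supp ρ ⊆ supp σ, and let t(λ) = Tr[(ρ − λσ)_+] for λ ≥ 0, where (·)_+ denotes the positive part of a Hermitian operator. Then t is continuous and strictly decreasing on the interval [0, 2^{D_max(ρ||σ)}], with t(0) = 1 and t(2^{D_max(ρ||σ)}) = 0, so its range on this interval is [0,1]. -/

import Mathlib

open Matrix Filter
open scoped ComplexOrder

attribute [local instance] Classical.propDecidable

noncomputable section

namespace QComb

/-- Dimension of the `j`-th factor of the partial tensor product keeping only
the first `n` factors (the remaining factors are replaced by trivial spaces). -/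
def cut {N : ℕ} (d : Fin N → ℕ) (n : ℕ) (j : Fin N) : ℕ := if j.val < n then d j else 1

/-- Index set of the tensor product of the first `n` factors of the family of
Hilbert spaces `ℂ^{d j}`, `j : Fin N`. -/
def CutIdx {N : ℕ} (d : Fin N → ℕ) (n : ℕ) : Type := ∀ j : Fin N, Fin (cut d n j)

instance {N : ℕ} (d : Fin N → ℕ) (n : ℕ) : Fintype (CutIdx d n) := Pi.instFintype

instance {N : ℕ} (d : Fin N → ℕ) (n : ℕ) : DecidableEq (CutIdx d n) :=
  fun a b => Fintype.decidablePiFintype a b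

/-- Operators on the tensor product `⊗_{j<n} (H_j^out ⊗ H_j^in)` where
`H_j^out = ℂ^{dO j}` and `H_j^in = ℂ^{dI j}`. -/
abbrev CMat {N : ℕ} (dO dI : Fin N → ℕ) (n : ℕ) : Type :=
  Matrix (CutIdx dO n × CutIdx dI n) (CutIdx dO n × CutIdx dI n) ℂ

/-- Extend an index on the first `n` factors by a value `k` in the `n`-th factor. -/
def extendAt {N : ℕ} (d : Fin N → ℕ) (n : Fin N) (x : CutIdx d n.val) (k : Fin (d n)) :
    CutIdx d (n.val + 1) := fun j =>
  if h : j.val < n.val then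
    Fin.cast (show cut d n.val j = cut d (n.val + 1) j by
      simp [cut, h, Nat.lt_succ_of_lt h]) (x j)
  else if h2 : j.val < n.val + 1 then
    Fin.cast (show d n = cut d (n.val + 1) j by
      have hje : j = n := Fin.ext (by omega)
      subst hje; simp [cut, h2]) k
  else
    Fin.cast (show cut d n.val j = cut d (n.val + 1) j by simp [cut, h, h2]) (x j)

/-- Restrict an index on the first `n+1` factors to the first `n` factors. -/
def restrictAt {N : ℕ} (d : Fin N → ℕ) (n : Fin N) (x : CutIdx d (n.val + 1)) :
    CutIdx d n.val := fun j =>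
  if h : j.val < n.val then
    Fin.cast (show cut d (n.val + 1) j = cut d n.val j by
      simp [cut, h, Nat.lt_succ_of_lt h]) (x j)
  else
    ⟨0, by simp only [cut, if_neg h]; omega⟩

/-- The component of an index on the first `n+1` factors in the `n`-th factor. -/
def componentAt {N : ℕ} (d : Fin N → ℕ) (n : Fin N) (x : CutIdx d (n.val + 1)) :
    Fin (d n) :=
  Fin.cast (show cut d (n.val + 1) n = d n by simp [cut]) (x n)

/-- Partial trace over the `n`-th output space. -/
def ptraceO {N : ℕ} (dO : Fin N → ℕ) (n : Fin N) {β : Type} [Fintype β]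
    (M : Matrix (CutIdx dO (n.val + 1) × β) (CutIdx dO (n.val + 1) × β) ℂ) :
    Matrix (CutIdx dO n.val × β) (CutIdx dO n.val × β) ℂ :=
  fun p q => ∑ k : Fin (dO n), M (extendAt dO n p.1 k, p.2) (extendAt dO n q.1 k, q.2)

/-- Partial trace over the `n`-th input space. -/
def ptraceI {N : ℕ} (dI : Fin N → ℕ) (n : Fin N) {α : Type} [Fintype α]
    (M : Matrix (α × CutIdx dI (n.val + 1)) (α × CutIdx dI (n.val + 1)) ℂ) :
    Matrix (α × CutIdx dI n.val) (α × CutIdx dI n.val) ℂ :=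
  fun p q => ∑ k : Fin (dI n), M (p.1, extendAt dI n p.2 k) (q.1, extendAt dI n q.2 k)

/-- Tensoring with the identity on the `n`-th output space. -/
def idTensorO {N : ℕ} (dO : Fin N → ℕ) (n : Fin N) {β : Type}
    (M : Matrix (CutIdx dO n.val × β) (CutIdx dO n.val × β) ℂ) :
    Matrix (CutIdx dO (n.val + 1) × β) (CutIdx dO (n.val + 1) × β) ℂ :=
  fun p q => (if componentAt dO n p.1 = componentAt dO n q.1 then (1 : ℂ) else 0) *
    M (restrictAt dO n p.1, p.2) (restrictAt dO n q.1, q.2)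

/-- Tensoring with the identity on the `n`-th input space. -/
def idTensorI {N : ℕ} (dI : Fin N → ℕ) (n : Fin N) {α : Type}
    (M : Matrix (α × CutIdx dI n.val) (α × CutIdx dI n.val) ℂ) :
    Matrix (α × CutIdx dI (n.val + 1)) (α × CutIdx dI (n.val + 1)) ℂ :=
  fun p q => (if componentAt dI n p.2 = componentAt dI n q.2 then (1 : ℂ) else 0) *
    M (p.1, restrictAt dI n p.2) (q.1, restrictAt dI n q.2)

/-- Transport an operator along an equality of the number of kept factors. -/
def castCMat {N : ℕ} (dO dI : Fin N → ℕ) {a b : ℕ} (h : a = b) (M : CMat dO dI a) :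
    CMat dO dI b := h ▸ M

/-- `C` is a quantum comb on `⊗_{j=1}^N (H_j^out ⊗ H_j^in)`:
it is positive semidefinite and admits a chain `C⁽ⁿ⁾` of positive semidefinite operators with
`C⁽ᴺ⁾ = C`, `C⁽⁰⁾ = 1` and `Tr_{H_n^out} C⁽ⁿ⁾ = I_{H_n^in} ⊗ C⁽ⁿ⁻¹⁾`. -/
def IsQuantumComb {N : ℕ} (dO dI : Fin N → ℕ) (C : CMat dO dI N) : Prop :=
  C.PosSemidef ∧ ∃ Cn : (n : ℕ) → CMat dO dI n,
    (∀ n ≤ N, (Cn n).PosSemidef) ∧ Cn N = C ∧ Cn 0 = 1 ∧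
    ∀ n : Fin N, ptraceO dO n (Cn (n.val + 1)) = idTensorI dI n (Cn n.val)

/-- `Γ` is a dual comb: `Γ = I_{H_N^out} ⊗ Γ⁽ᴺ⁾` for a chain of positive semidefinite operators
`Γ⁽ⁿ⁾` on `H_n^in ⊗ (⊗_{j<n} (H_j^out ⊗ H_j^in))` with
`Tr_{H_n^in} Γ⁽ⁿ⁾ = I_{H_{n-1}^out} ⊗ Γ⁽ⁿ⁻¹⁾` and `Tr_{H_1^in} Γ⁽¹⁾ = 1`.
Here `G m` plays the role of `Γ⁽ᵐ⁺¹⁾`. -/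
def IsDualComb {N : ℕ} (dO dI : Fin N → ℕ) (Γ : CMat dO dI N) : Prop :=
  ∃ G : (m : ℕ) → Matrix (CutIdx dO m × CutIdx dI (m + 1)) (CutIdx dO m × CutIdx dI (m + 1)) ℂ,
    (∀ m < N, (G m).PosSemidef) ∧
    (∀ h0 : 0 < N, ptraceI dI ⟨0, h0⟩ (G 0) = 1) ∧
    (∀ m, ∀ h : m + 1 < N,
      ptraceI dI ⟨m + 1, h⟩ (G (m + 1)) = idTensorO dO ⟨m, Nat.lt_of_succ_lt h⟩ (G m)) ∧
    (∀ m, ∀ h : m + 1 = N,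
      Γ = castCMat dO dI h (idTensorO dO ⟨m, h ▸ Nat.lt_succ_self m⟩ (G m))) ∧
    (N = 0 → Γ = 1)

/-- The square root of a positive semidefinite matrix, as `Matrix.PosSemidef.sqrt` was defined
in the older Mathlib (removed since). -/
def psdSqrt {𝕜 : Type*} [RCLike 𝕜] {n : Type*} [Fintype n] [DecidableEq n] {A : Matrix n n 𝕜}
    (hA : A.PosSemidef) : Matrix n n 𝕜 :=
  hA.1.eigenvectorUnitary.1 * diagonal ((↑) ∘ (Real.sqrt ·) ∘ hA.1.eigenvalues) *
    (star hA.1.eigenvectorUnitary : Matrix n n 𝕜)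

/-- The trace norm `‖A‖₁ = Tr √(AᴴA)`. -/
def traceNorm {ι : Type} [Fintype ι] [DecidableEq ι] (A : Matrix ι ι ℂ) : ℝ :=
  ((psdSqrt (Matrix.posSemidef_conjTranspose_mul_self A)).trace).re

/-- Square root of a positive semidefinite matrix (junk value `0` otherwise). -/
def msqrt {ι : Type} [Fintype ι] [DecidableEq ι] (A : Matrix ι ι ℂ) : Matrix ι ι ℂ :=
  if h : A.PosSemidef then psdSqrt h else 0

/-- Positive part `A₊` of a Hermitian matrix (junk value `0` otherwise). -/
def posPartMat {ι : Type} [Fintype ι] [DecidableEq ι] (A : Matrix ι ι ℂ) : Matrix ι ι ℂ :=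
  if h : A.IsHermitian then h.cfc (fun x => max x 0) else 0

/-- Matrix logarithm in base 2 of a Hermitian matrix via the functional calculus
(junk value `0` otherwise). -/
def mlog {ι : Type} [Fintype ι] [DecidableEq ι] (A : Matrix ι ι ℂ) : Matrix ι ι ℂ :=
  if h : A.IsHermitian then h.cfc (Real.logb 2) else 0

/-- Quantum relative entropy `D(ρ‖σ) = Tr[ρ (log ρ - log σ)]` (base-2 logarithm). -/
def relEnt {ι : Type} [Fintype ι] [DecidableEq ι] (ρ σ : Matrix ι ι ℂ) : ℝ :=
  ((ρ * (mlog ρ - mlog σ)).trace).re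

/-- Support inclusion `supp A ⊆ supp B` (ranges of the associated linear maps). -/
def suppSubset {ι : Type} [Fintype ι] [DecidableEq ι] (A B : Matrix ι ι ℂ) : Prop :=
  LinearMap.range (Matrix.toLin' A) ≤ LinearMap.range (Matrix.toLin' B)

/-- The feasible set of the max-relative entropy `D_max(A‖B)`. -/
def DmaxSet {ι : Type} [Fintype ι] [DecidableEq ι] (A B : Matrix ι ι ℂ) : Set ℝ :=
  {lam : ℝ | 0 ≤ lam ∧ ((lam : ℂ) • B - A).PosSemidef}

/-- Max-relative entropy `D_max(A‖B) = log min {λ ≥ 0 | λB - A ≥ 0}`, equal to `⊤`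
when no such `λ` exists (i.e. when `supp A ⊄ supp B`). -/
def Dmax {ι : Type} [Fintype ι] [DecidableEq ι] (A B : Matrix ι ι ℂ) : EReal :=
  if (DmaxSet A B).Nonempty then ((Real.logb 2 (sInf (DmaxSet A B)) : ℝ) : EReal) else ⊤

/-- Smooth max-relative entropy of quantum combs:
`D_max^ε(C₀‖C₁) = min { D_max(C̃‖C₁) | C̃ a quantum comb, ½‖C̃ - C₀‖₁ ≤ ε }`. -/
def DmaxSmoothComb {N : ℕ} (dO dI : Fin N → ℕ) (ε : ℝ) (C0 C1 : CMat dO dI N) : EReal :=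
  sInf { x : EReal | ∃ C : CMat dO dI N, IsQuantumComb dO dI C ∧
    traceNorm (C - C0) ≤ 2 * ε ∧ x = Dmax C C1 }

/-- Revised smooth max-relative entropy of quantum combs:
`D̃_max^ε(C₀‖C₁) = max_Γ min { D_max(C‖√Γ C₁ √Γ) | C ≥ 0, Tr C = 1,
½‖√Γ C₀ √Γ - C‖₁ ≤ ε }`, the max over dual combs `Γ`. -/
def DmaxTilde {N : ℕ} (dO dI : Fin N → ℕ) (ε : ℝ) (C0 C1 : CMat dO dI N) : EReal :=
  sSup { x : EReal | ∃ Γ : CMat dO dI N, IsDualComb dO dI Γ ∧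
    x = sInf { y : EReal | ∃ C : CMat dO dI N, C.PosSemidef ∧ C.trace = 1 ∧
      traceNorm (msqrt Γ * C0 * msqrt Γ - C) ≤ 2 * ε ∧
      y = Dmax C (msqrt Γ * C1 * msqrt Γ) } }

/-- Hypothesis-testing quantity
`β_δ(C₀‖C₁) = min { Tr[Π √Γ C₁ √Γ] | 0 ≤ Π ≤ I, Γ dual comb, Tr[(I-Π) √Γ C₀ √Γ] ≤ δ }`. -/
def betaHT {N : ℕ} (dO dI : Fin N → ℕ) (δ : ℝ) (C0 C1 : CMat dO dI N) : ℝ :=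
  sInf { b : ℝ | ∃ P Γ : CMat dO dI N, P.PosSemidef ∧ ((1 : CMat dO dI N) - P).PosSemidef ∧
    IsDualComb dO dI Γ ∧
    (((1 - P) * (msqrt Γ * C0 * msqrt Γ)).trace).re ≤ δ ∧
    b = ((P * (msqrt Γ * C1 * msqrt Γ)).trace).re }

/-- Maximum score `w_max(Ω) = max { Tr(Ω C) | C a quantum comb }`. -/
def wmax {N : ℕ} (dO dI : Fin N → ℕ) (Ω : CMat dO dI N) : ℝ :=
  sSup { w : ℝ | ∃ C : CMat dO dI N, IsQuantumComb dO dI C ∧ w = ((Ω * C).trace).re }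

/-- Smooth maximum score `w_max^ε(Ω) = sup { w_max(Ω') | Ω' ≥ 0, Tr Ω' = Tr Ω,
½‖Ω - Ω'‖₁ ≤ ε }`. -/
def wmaxSmooth {N : ℕ} (dO dI : Fin N → ℕ) (ε : ℝ) (Ω : CMat dO dI N) : ℝ :=
  sSup { w : ℝ | ∃ Ω' : CMat dO dI N, Ω'.PosSemidef ∧ traceNorm (Ω - Ω') ≤ 2 * ε ∧
    Ω'.trace = Ω.trace ∧ w = wmax dO dI Ω' }

/-- Dimension function of the `n`-fold concatenated network. -/
def repDim {N : ℕ} (n : ℕ) (d : Fin N → ℕ) : Fin (n * N) → ℕ :=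
  fun j => d ⟨j.val % N, Nat.mod_lt _ (Nat.pos_of_ne_zero fun h =>
    Nat.not_lt_zero j.val (by simpa [h] using j.isLt))⟩

/-- Extract the `i`-th copy of an index of the `n`-fold concatenated network. -/
def sliceIdx {N : ℕ} (n : ℕ) (d : Fin N → ℕ) (i : Fin n) (x : CutIdx (repDim n d) (n * N)) :
    CutIdx d N := fun j =>
  Fin.cast (by
    have hj := j.isLt
    have h1 : (i.val + 1) * N ≤ n * N := Nat.mul_le_mul_right N i.isLt
    have h2 : (i.val + 1) * N = i.val * N + N := Nat.succ_mul _ _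
    have hb : i.val * N + j.val < n * N := by omega
    have hm : (i.val * N + j.val) % N = j.val := by
      rw [Nat.add_comm, Nat.add_mul_mod_self_right]; exact Nat.mod_eq_of_lt hj
    show cut (repDim n d) (n * N) ⟨i.val * N + j.val, hb⟩ = cut d N j
    simp only [cut, repDim, if_pos hb, if_pos hj]
    exact congrArg d (Fin.ext hm))
    (x ⟨i.val * N + j.val, by
      have hj := j.isLt
      have h1 : (i.val + 1) * N ≤ n * N := Nat.mul_le_mul_right N i.isLt
      have h2 : (i.val + 1) * N = i.val * N + N := Nat.succ_mul _ _
      omega⟩)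

/-- The `n`-fold tensor power `Ω^{⊗n}` on the `n`-fold concatenated network. -/
def tpow {N : ℕ} (dO dI : Fin N → ℕ) (n : ℕ) (Ω : CMat dO dI N) :
    CMat (repDim n dO) (repDim n dI) (n * N) :=
  fun p q => ∏ i : Fin n,
    Ω (sliceIdx n dO i p.1, sliceIdx n dI i p.2) (sliceIdx n dO i q.1, sliceIdx n dI i q.2)

/-- Extract the left part of an index of the concatenation of two networks. -/
def appendIdxL {N M : ℕ} (d : Fin N → ℕ) (e : Fin M → ℕ)
    (x : CutIdx (Fin.append d e) (N + M)) : CutIdx d N := fun j =>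
  Fin.cast (by
    show cut (Fin.append d e) (N + M) (Fin.castAdd M j) = cut d N j
    simp only [cut, if_pos (Fin.castAdd M j).isLt, if_pos j.isLt]
    exact Fin.append_left d e j) (x (Fin.castAdd M j))

/-- Extract the right part of an index of the concatenation of two networks. -/
def appendIdxR {N M : ℕ} (d : Fin N → ℕ) (e : Fin M → ℕ)
    (x : CutIdx (Fin.append d e) (N + M)) : CutIdx e M := fun j =>
  Fin.cast (by
    show cut (Fin.append d e) (N + M) (Fin.natAdd N j) = cut e M j
    simp only [cut, if_pos (Fin.natAdd N j).isLt, if_pos j.isLt]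
    exact Fin.append_right d e j) (x (Fin.natAdd N j))

/-- The tensor product `C ⊗ C'` of operators on two networks, as an operator on the
concatenated network with `N + M` steps. -/
def tens2 {N M : ℕ} {dO dI : Fin N → ℕ} {eO eI : Fin M → ℕ}
    (C : CMat dO dI N) (C' : CMat eO eI M) :
    CMat (Fin.append dO eO) (Fin.append dI eI) (N + M) :=
  fun p q =>
    C (appendIdxL dO eO p.1, appendIdxL dI eI p.2) (appendIdxL dO eO q.1, appendIdxL dI eI q.2) *
    C' (appendIdxR dO eO p.1, appendIdxR dI eI p.2) (appendIdxR dO eO q.1, appendIdxR dI eI q.2)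

/-!
`Tr[(ρ - γσ)₊]` is the maximum of the affine functions `γ ↦ Tr[Qρ] - γ Tr[Qσ]` over
`0 ≤ Q ≤ 1`, attained at the spectral projection of `ρ - γσ` onto its positive eigenvalues. The
slopes lie in `[-Tr σ, 0]`, so `t` is Lipschitz, and at a maximiser the slope can vanish only where
`t` already vanishes, so `t` decreases strictly up to its first zero. The zeros of `t` on `[0, ∞)`
are the feasible `λ` of `D_max(ρ‖σ)`; one exists because `supp ρ ⊆ supp σ` gives
`ρ = PρP ≤ ‖ρ‖ P ≤ c σ` for the support projection `P` of `σ`, and by continuity the least one,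
`2^{D_max(ρ‖σ)}`, is itself a zero. Finally `t(0) = Tr ρ = 1`.
-/

end QComb

open scoped MatrixOrder

namespace Matrix

variable {n 𝕜 : Type*} [Fintype n] [RCLike 𝕜]

lemma trace_mul_nonneg {A B : Matrix n n 𝕜} (hA : 0 ≤ A) (hB : 0 ≤ B) : 0 ≤ (A * B).trace := by
  classical
  obtain ⟨C, rfl⟩ := CStarAlgebra.nonneg_iff_eq_star_mul_self.mp hB
  rw [← mul_assoc, trace_mul_comm, ← mul_assoc]
  exact (hA.posSemidef.mul_mul_conjTranspose_same C).trace_nonneg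

lemma re_trace_mul_nonneg {A B : Matrix n n 𝕜} (hA : 0 ≤ A) (hB : 0 ≤ B) :
    0 ≤ RCLike.re (A * B).trace :=
  (RCLike.nonneg_iff.mp (trace_mul_nonneg hA hB)).1

variable [DecidableEq n]

lemma continuousOn_real_spectrum (f : ℝ → ℝ) (A : Matrix n n 𝕜) :
    ContinuousOn f (spectrum ℝ A) :=
  A.finite_real_spectrum.continuousOn f

lemma re_trace_mul_le_re_trace {A B : Matrix n n 𝕜} (hA : A ≤ 1) (hB : 0 ≤ B) :
    RCLike.re (A * B).trace ≤ RCLike.re B.trace := by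
  have h := re_trace_mul_nonneg (sub_nonneg.mpr hA) hB
  rwa [sub_mul, one_mul, trace_sub, map_sub, sub_nonneg] at h

lemma exists_mul_eq_posPart {A : Matrix n n 𝕜} (hA : IsSelfAdjoint A) :
    ∃ P : Matrix n n 𝕜, 0 ≤ P ∧ P ≤ 1 ∧ P * A = A⁺ := by
  refine ⟨cfc (fun x : ℝ => if 0 < x then 1 else 0) A, cfc_nonneg fun x _ => ?_,
    cfc_le_one _ _ fun x _ => ?_, ?_⟩
  · split_ifs <;> norm_num
  · split_ifs <;> norm_num
  · nth_rewrite 2 [← cfc_id' ℝ A]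
    rw [← cfc_mul _ _ _ (continuousOn_real_spectrum _ A) (continuousOn_real_spectrum _ A),
      CFC.posPart_def, cfcₙ_eq_cfc]
    refine cfc_congr fun x _ => ?_
    by_cases hx : 0 < x
    · simp [hx, hx.le]
    · simp [hx, posPart_eq_zero.mpr (not_lt.mp hx)]

lemma re_trace_mul_le_re_trace_posPart {A Q : Matrix n n 𝕜} (hA : IsSelfAdjoint A)
    (hQ₀ : 0 ≤ Q) (hQ₁ : Q ≤ 1) : RCLike.re (Q * A).trace ≤ RCLike.re A⁺.trace := by
  have hsplit : A⁺ - Q * A = (1 - Q) * A⁺ + Q * A⁻ := by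
    calc A⁺ - Q * A = A⁺ - Q * (A⁺ - A⁻) := by rw [CFC.posPart_sub_negPart A hA]
      _ = (1 - Q) * A⁺ + Q * A⁻ := by noncomm_ring
  have h := add_nonneg (trace_mul_nonneg (sub_nonneg.mpr hQ₁) (CFC.posPart_nonneg A))
    (trace_mul_nonneg hQ₀ (CFC.negPart_nonneg A))
  rw [← trace_add, ← hsplit, trace_sub] at h
  simpa using (RCLike.nonneg_iff.mp h).1

def supportProj (A : Matrix n n 𝕜) : Matrix n n 𝕜 := cfc (fun x : ℝ => if x = 0 then 0 else 1) A

lemma isSelfAdjoint_supportProj (A : Matrix n n 𝕜) : IsSelfAdjoint (supportProj A) :=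
  cfc_predicate _ _

lemma supportProj_mul_self (A : Matrix n n 𝕜) : supportProj A * supportProj A = supportProj A := by
  rw [supportProj, ← cfc_mul _ _ _ (continuousOn_real_spectrum _ A)
    (continuousOn_real_spectrum _ A)]
  exact cfc_congr fun x _ => by split_ifs <;> simp

lemma mul_supportProj {A : Matrix n n 𝕜} (hA : IsSelfAdjoint A) : A * supportProj A = A := by
  nth_rewrite 1 [← cfc_id' ℝ A]
  rw [supportProj, ← cfc_mul _ _ _ (continuousOn_real_spectrum _ A)
    (continuousOn_real_spectrum _ A)]
  nth_rewrite 2 [← cfc_id' ℝ A]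
  exact cfc_congr fun x _ => by split_ifs with hx <;> simp [hx]

lemma exists_supportProj_le_smul {A : Matrix n n 𝕜} (hA : 0 ≤ A) :
    ∃ c : ℝ, 0 ≤ c ∧ supportProj A ≤ c • A := by
  obtain ⟨c, hc⟩ := (A.finite_real_spectrum.image (·⁻¹)).bddAbove
  refine ⟨max c 0, le_max_right _ _, ?_⟩
  rw [← cfc_const_mul_id (R := ℝ) _ A]
  refine cfc_mono (hf := continuousOn_real_spectrum _ A) fun x hx => ?_
  have hx₀ : 0 ≤ x := spectrum_nonneg_of_nonneg hA hx
  split_ifs with h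
  · positivity
  · calc (1 : ℝ) = x⁻¹ * x := (inv_mul_cancel₀ h).symm
      _ ≤ max c 0 * x := by gcongr; exact (hc ⟨x, hx, rfl⟩).trans (le_max_left _ _)

lemma exists_le_algebraMap {A : Matrix n n 𝕜} (hA : IsSelfAdjoint A) :
    ∃ M : ℝ, 0 ≤ M ∧ A ≤ algebraMap ℝ _ M := by
  obtain ⟨M, hM⟩ := A.finite_real_spectrum.bddAbove
  exact ⟨max M 0, le_max_right _ _, le_algebraMap_of_spectrum_le fun x hx =>
    (hM hx).trans (le_max_left _ _)⟩

end Matrix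

namespace QComb

section HockeyStick

lemma isSelfAdjoint_sub_ofReal_smul {ι : Type*} {ρ σ : Matrix ι ι ℂ} (hρ : IsSelfAdjoint ρ)
    (hσ : IsSelfAdjoint σ) (γ : ℝ) : IsSelfAdjoint (ρ - (γ : ℂ) • σ) :=
  hρ.sub (IsSelfAdjoint.smul (Complex.conj_ofReal γ) hσ)

variable {ι : Type*} [Fintype ι] [DecidableEq ι] {ρ σ Q : Matrix ι ι ℂ}

/-- The function `t(γ)` of the statement, known as the hockey-stick divergence `E_γ(ρ‖σ)`. -/
def hockeyStick (ρ σ : Matrix ι ι ℂ) (γ : ℝ) : ℝ := ((ρ - (γ : ℂ) • σ)⁺.trace).re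

lemma re_trace_mul_sub_ofReal_smul (Q : Matrix ι ι ℂ) (γ : ℝ) :
    (Q * (ρ - (γ : ℂ) • σ)).trace.re = (Q * ρ).trace.re - γ * (Q * σ).trace.re := by
  simp [mul_sub, trace_sub]

lemma le_hockeyStick (hρ : IsSelfAdjoint ρ) (hσ : IsSelfAdjoint σ) (hQ₀ : 0 ≤ Q) (hQ₁ : Q ≤ 1)
    (γ : ℝ) : (Q * ρ).trace.re - γ * (Q * σ).trace.re ≤ hockeyStick ρ σ γ := by
  rw [← re_trace_mul_sub_ofReal_smul]
  exact re_trace_mul_le_re_trace_posPart (isSelfAdjoint_sub_ofReal_smul hρ hσ γ) hQ₀ hQ₁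

lemma exists_hockeyStick_eq (hρ : IsSelfAdjoint ρ) (hσ : IsSelfAdjoint σ) (γ : ℝ) :
    ∃ Q : Matrix ι ι ℂ, 0 ≤ Q ∧ Q ≤ 1 ∧
      hockeyStick ρ σ γ = (Q * ρ).trace.re - γ * (Q * σ).trace.re := by
  obtain ⟨Q, hQ₀, hQ₁, hQ⟩ := exists_mul_eq_posPart (isSelfAdjoint_sub_ofReal_smul hρ hσ γ)
  exact ⟨Q, hQ₀, hQ₁, by rw [← re_trace_mul_sub_ofReal_smul, hQ]; rfl⟩

lemma hockeyStick_nonneg (ρ σ : Matrix ι ι ℂ) (γ : ℝ) : 0 ≤ hockeyStick ρ σ γ :=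
  (Complex.nonneg_iff.mp (CFC.posPart_nonneg _).posSemidef.trace_nonneg).1

lemma hockeyStick_zero (hρ : 0 ≤ ρ) : hockeyStick ρ σ 0 = ρ.trace.re := by
  simp [hockeyStick, (CFC.posPart_eq_self ρ).mpr hρ]

lemma hockeyStick_eq_zero_iff (hρ : IsSelfAdjoint ρ) (hσ : IsSelfAdjoint σ) {γ : ℝ} :
    hockeyStick ρ σ γ = 0 ↔ ρ ≤ (γ : ℂ) • σ := by
  have htr := Complex.nonneg_iff.mp (CFC.posPart_nonneg (ρ - (γ : ℂ) • σ)).posSemidef.trace_nonneg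
  rw [← sub_nonpos, ← CFC.posPart_eq_zero_iff _ (isSelfAdjoint_sub_ofReal_smul hρ hσ γ),
    ← (CFC.posPart_nonneg _).posSemidef.trace_eq_zero_iff, Complex.ext_iff, ← htr.2]
  simp [hockeyStick]

lemma hockeyStick_le_add_mul (hρ : IsSelfAdjoint ρ) (hσ : 0 ≤ σ) (a b : ℝ) :
    hockeyStick ρ σ a ≤ hockeyStick ρ σ b + σ.trace.re * dist a b := by
  obtain ⟨Q, hQ₀, hQ₁, ha⟩ := exists_hockeyStick_eq hρ hσ.isSelfAdjoint a
  have hb := le_hockeyStick hρ hσ.isSelfAdjoint hQ₀ hQ₁ b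
  have hs₀ : 0 ≤ (Q * σ).trace.re := re_trace_mul_nonneg hQ₀ hσ
  have hs₁ : (Q * σ).trace.re ≤ σ.trace.re := re_trace_mul_le_re_trace hQ₁ hσ
  have hab : b - a ≤ dist a b := by rw [dist_comm]; exact le_abs_self _
  calc hockeyStick ρ σ a ≤ hockeyStick ρ σ b + (b - a) * (Q * σ).trace.re := by linarith
    _ ≤ hockeyStick ρ σ b + dist a b * (Q * σ).trace.re := by gcongr
    _ ≤ hockeyStick ρ σ b + σ.trace.re * dist a b := by
      rw [mul_comm]; gcongr

lemma continuous_hockeyStick (hρ : IsSelfAdjoint ρ) (hσ : 0 ≤ σ) :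
    Continuous (hockeyStick ρ σ) :=
  (LipschitzWith.of_le_add_mul' _ (hockeyStick_le_add_mul hρ hσ)).continuous

/-- A maximiser `Q` for `y` gives `t x ≥ t y + (y - x) Tr[Qσ]`; if `Tr[Qσ] = 0`, comparing with `c`
gives `Tr[Qρ] ≤ 0`, so `t y = 0`. -/
lemma hockeyStick_lt_of_lt (hρ : IsSelfAdjoint ρ) (hσ : 0 ≤ σ) {c x y : ℝ}
    (hc : hockeyStick ρ σ c = 0) (hxy : x < y) (hx : 0 < hockeyStick ρ σ x) :
    hockeyStick ρ σ y < hockeyStick ρ σ x := by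
  obtain ⟨Q, hQ₀, hQ₁, hy⟩ := exists_hockeyStick_eq hρ hσ.isSelfAdjoint y
  have hQx := le_hockeyStick hρ hσ.isSelfAdjoint hQ₀ hQ₁ x
  have hQc := le_hockeyStick hρ hσ.isSelfAdjoint hQ₀ hQ₁ c
  have hs : 0 ≤ (Q * σ).trace.re := re_trace_mul_nonneg hQ₀ hσ
  rcases hs.lt_or_eq with hs | hs
  · nlinarith
  · rw [← hs] at hy hQc
    linarith

end HockeyStick

lemma posPartMat_eq_posPart {ι : Type} [Fintype ι] [DecidableEq ι] (A : Matrix ι ι ℂ) :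
    posPartMat A = A⁺ := by
  by_cases hA : A.IsHermitian
  · rw [posPartMat, dif_pos hA, CFC.posPart_def, cfcₙ_eq_cfc, hA.cfc_eq]
    rfl
  · rw [posPartMat, dif_neg hA, CFC.posPart_eq_zero_of_not_isSelfAdjoint hA]

section Dmax

variable {ι : Type} [Fintype ι] [DecidableEq ι] {ρ σ : Matrix ι ι ℂ}

lemma mulVec_eq_zero_of_suppSubset (hρ : ρ.PosSemidef) (hσ : σ.IsHermitian)
    (h : suppSubset ρ σ) {x : ι → ℂ} (hx : σ *ᵥ x = 0) : ρ *ᵥ x = 0 := by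
  obtain ⟨y, hy⟩ := h (LinearMap.mem_range_self (toLin' ρ) x)
  rw [toLin'_apply, toLin'_apply] at hy
  refine (hρ.dotProduct_mulVec_zero_iff x).mp ?_
  rw [← hy, dotProduct_mulVec, ← hσ.eq, ← star_mulVec, hx, star_zero, zero_dotProduct]

lemma mul_supportProj_of_suppSubset (hρ : ρ.PosSemidef) (hσ : σ.IsHermitian)
    (h : suppSubset ρ σ) : ρ * supportProj σ = ρ := by
  have hσP : σ * (1 - supportProj σ) = 0 := by
    rw [mul_sub, mul_one, mul_supportProj hσ.isSelfAdjoint, sub_self]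
  have hρP : ρ * (1 - supportProj σ) = 0 := by
    refine ext_iff_mulVec.mpr fun v => ?_
    rw [← mulVec_mulVec, zero_mulVec]
    exact mulVec_eq_zero_of_suppSubset hρ hσ h (by rw [mulVec_mulVec, hσP, zero_mulVec])
  rwa [mul_sub, mul_one, sub_eq_zero, eq_comm] at hρP

lemma exists_le_smul_of_suppSubset (hρ : ρ.PosSemidef) (hσ : σ.PosSemidef)
    (h : suppSubset ρ σ) : ∃ c : ℝ, 0 ≤ c ∧ ρ ≤ (c : ℂ) • σ := by
  set P := supportProj σ
  have hP : IsSelfAdjoint P := isSelfAdjoint_supportProj σ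
  have hρP : ρ * P = ρ := mul_supportProj_of_suppSubset hρ hσ.isHermitian h
  have hPρ : P * ρ = ρ := by
    simpa [hP.star_eq, hρ.isHermitian.isSelfAdjoint.star_eq] using congr_arg star hρP
  obtain ⟨M, hM₀, hM⟩ := exists_le_algebraMap hρ.isHermitian.isSelfAdjoint
  obtain ⟨c, hc₀, hc⟩ := exists_supportProj_le_smul hσ.nonneg
  refine ⟨M * c, mul_nonneg hM₀ hc₀, ?_⟩
  calc ρ = star P * ρ * P := by rw [hP.star_eq, hPρ, hρP]
    _ ≤ star P * algebraMap ℝ _ M * P := star_left_conjugate_le_conjugate hM P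
    _ = M • P := by
      rw [hP.star_eq, Algebra.algebraMap_eq_smul_one, mul_smul_comm, mul_one, smul_mul_assoc,
        supportProj_mul_self]
    _ ≤ M • c • σ := smul_le_smul_of_nonneg_left hc hM₀
    _ = ((M * c : ℝ) : ℂ) • σ := by rw [smul_smul, Complex.coe_smul]

lemma mem_DmaxSet_iff (hρ : IsSelfAdjoint ρ) (hσ : IsSelfAdjoint σ) {γ : ℝ} :
    γ ∈ DmaxSet ρ σ ↔ 0 ≤ γ ∧ hockeyStick ρ σ γ = 0 := by
  rw [hockeyStick_eq_zero_iff hρ hσ]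
  rfl

lemma sInf_DmaxSet_mem (hρ : IsSelfAdjoint ρ) (hσ : 0 ≤ σ) (hne : (DmaxSet ρ σ).Nonempty) :
    sInf (DmaxSet ρ σ) ∈ DmaxSet ρ σ := by
  have hS : DmaxSet ρ σ = Set.Ici 0 ∩ hockeyStick ρ σ ⁻¹' {0} := by
    ext γ
    exact mem_DmaxSet_iff hρ hσ.isSelfAdjoint
  refine IsClosed.csInf_mem ?_ hne ⟨0, fun _ hγ => hγ.1⟩
  rw [hS]
  exact isClosed_Ici.inter (isClosed_singleton.preimage (continuous_hockeyStick hρ hσ))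

lemma strictAntiOn_hockeyStick (hρ : IsSelfAdjoint ρ) (hσ : 0 ≤ σ)
    (hne : (DmaxSet ρ σ).Nonempty) :
    StrictAntiOn (hockeyStick ρ σ) (Set.Icc 0 (sInf (DmaxSet ρ σ))) := by
  have hmin := (mem_DmaxSet_iff hρ hσ.isSelfAdjoint).mp (sInf_DmaxSet_mem hρ hσ hne)
  intro x hx y hy hxy
  refine hockeyStick_lt_of_lt hρ hσ hmin.2 hxy ((hockeyStick_nonneg ρ σ x).lt_of_ne' fun h0 => ?_)
  have hxS : x ∈ DmaxSet ρ σ := (mem_DmaxSet_iff hρ hσ.isSelfAdjoint).mpr ⟨hx.1, h0⟩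
  exact (hxy.trans_le hy.2).not_ge (csInf_le ⟨0, fun _ hγ => hγ.1⟩ hxS)

lemma two_rpow_toReal_Dmax {A B : Matrix ι ι ℂ} (hne : (DmaxSet A B).Nonempty)
    (hpos : 0 < sInf (DmaxSet A B)) : (2 : ℝ) ^ (Dmax A B).toReal = sInf (DmaxSet A B) := by
  rw [Dmax, if_pos hne, EReal.toReal_coe, Real.rpow_logb zero_lt_two (by norm_num) hpos]

end Dmax

theorem trace_posPart_continuous_strictAnti_general {ι : Type} [Fintype ι] [DecidableEq ι]
    (ρ σ : Matrix ι ι ℂ)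
    (hρ : ρ.PosSemidef) (hρ1 : ρ.trace = 1) (hσ : σ.PosSemidef)
    (hsupp : suppSubset ρ σ) :
    ContinuousOn (fun lam : ℝ => ((posPartMat (ρ - (lam : ℂ) • σ)).trace).re)
        (Set.Icc 0 ((2 : ℝ) ^ (Dmax ρ σ).toReal)) ∧
      StrictAntiOn (fun lam : ℝ => ((posPartMat (ρ - (lam : ℂ) • σ)).trace).re)
        (Set.Icc 0 ((2 : ℝ) ^ (Dmax ρ σ).toReal)) ∧
      ((posPartMat (ρ - ((0 : ℝ) : ℂ) • σ)).trace).re = 1 ∧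
      ((posPartMat (ρ - ((((2 : ℝ) ^ (Dmax ρ σ).toReal) : ℝ) : ℂ) • σ)).trace).re = 0 ∧
      (fun lam : ℝ => ((posPartMat (ρ - (lam : ℂ) • σ)).trace).re) ''
          (Set.Icc 0 ((2 : ℝ) ^ (Dmax ρ σ).toReal)) = Set.Icc 0 1 := by
  have hρsa : IsSelfAdjoint ρ := hρ.isHermitian.isSelfAdjoint
  obtain ⟨c, hc₀, hc⟩ := exists_le_smul_of_suppSubset hρ hσ hsupp
  have hne : (DmaxSet ρ σ).Nonempty := ⟨c, hc₀, hc⟩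
  have hmin := (mem_DmaxSet_iff hρsa hσ.isHermitian.isSelfAdjoint).mp
    (sInf_DmaxSet_mem hρsa hσ.nonneg hne)
  have h0 : hockeyStick ρ σ 0 = 1 := by rw [hockeyStick_zero hρ.nonneg, hρ1, Complex.one_re]
  have hpos : 0 < sInf (DmaxSet ρ σ) :=
    hmin.1.lt_of_ne fun h => by rw [← h, h0] at hmin; exact one_ne_zero hmin.2
  have hcont := (continuous_hockeyStick hρsa hσ.nonneg).continuousOn
    (s := Set.Icc 0 (sInf (DmaxSet ρ σ)))
  have hanti := strictAntiOn_hockeyStick hρsa hσ.nonneg hne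
  simp only [posPartMat_eq_posPart, two_rpow_toReal_Dmax hne hpos]
  refine ⟨hcont, hanti, h0, hmin.2, ?_⟩
  exact (hcont.image_Icc_of_antitoneOn hpos.le hanti.antitoneOn).trans (by rw [h0, hmin.2])

/-- For density operators `ρ, σ` with `supp ρ ⊆ supp σ`, the function
`t(λ) = Tr[(ρ - λσ)₊]` is continuous and strictly decreasing on `[0, 2^{D_max(ρ‖σ)}]`,
with `t(0) = 1`, `t(2^{D_max(ρ‖σ)}) = 0`, and range `[0,1]` on this interval. -/
theorem trace_posPart_continuous_strictAnti {ι : Type} [Fintype ι] [DecidableEq ι]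
    (ρ σ : Matrix ι ι ℂ)
    (hρ : ρ.PosSemidef) (hρ1 : ρ.trace = 1) (hσ : σ.PosSemidef) (hσ1 : σ.trace = 1)
    (hsupp : suppSubset ρ σ) :
    ContinuousOn (fun lam : ℝ => ((posPartMat (ρ - (lam : ℂ) • σ)).trace).re)
        (Set.Icc 0 ((2 : ℝ) ^ (Dmax ρ σ).toReal)) ∧
      StrictAntiOn (fun lam : ℝ => ((posPartMat (ρ - (lam : ℂ) • σ)).trace).re)
        (Set.Icc 0 ((2 : ℝ) ^ (Dmax ρ σ).toReal)) ∧
      ((posPartMat (ρ - ((0 : ℝ) : ℂ) • σ)).trace).re = 1 ∧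
      ((posPartMat (ρ - ((((2 : ℝ) ^ (Dmax ρ σ).toReal) : ℝ) : ℂ) • σ)).trace).re = 0 ∧
      (fun lam : ℝ => ((posPartMat (ρ - (lam : ℂ) • σ)).trace).re) ''
          (Set.Icc 0 ((2 : ℝ) ^ (Dmax ρ σ).toReal)) = Set.Icc 0 1 :=
  trace_posPart_continuous_strictAnti_general ρ σ hρ hρ1 hσ hsupp

end QComb
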